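/- arXiv:0903.1585 — 4 statements merged into one kernel-verified Lean document; each statement's English description precedes it below -/
import Mathlib

section
/- Call a finite sequence of complex time steps τ_0, …, τ_{n−1} symmetric if there is an involution π ∈ S_n (π² = id, acting on {1,…,n}) such that τ_j = conj(τ_{π(j+1)−1}) for all j ∈ {0,…,n−1}. Let P be a polynomial with real coefficients, A a real d×d matrix, and τ_0,…,τ_{n−1} a symmetric sequence of complex steps. Then the product ∏_{j=0}^{n−1} P(τ_j A) is a real matrix. -/
/-!
Entrywise conjugation is an `ℝ`-algebra automorphism of complex matrices fixing `A`, so it sends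
`P(τ_l A)` to `P(conj τ_l A) = P(τ_{π l} A)`. Hence it permutes the factors of the product, and
since all factors are polynomials in `A` they commute, so the product is fixed by conjugation.
-/

open Matrix Polynomial

theorem Polynomial.commute_aeval_aeval {R A : Type*} [CommSemiring R] [Semiring A] [Algebra R A]
    {x y : A} (h : Commute x y) (p q : R[X]) : Commute (aeval x p) (aeval y q) :=
  Algebra.commute_of_mem_adjoin_singleton_of_commute (aeval_mem_adjoin_singleton R y)
    (Algebra.commute_of_mem_adjoin_singleton_of_commute (aeval_mem_adjoin_singleton R x)
      h.symm).symm

theorem List.prod_map_finRange_comp_perm {M : Type*} [Monoid M] {n : ℕ} {f : Fin n → M}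
    (hf : ∀ a b, Commute (f a) (f b)) (σ : Equiv.Perm (Fin n)) :
    ((List.finRange n).map (f ∘ σ)).prod = ((List.finRange n).map f).prod := by
  rw [← List.map_map]
  exact (σ.map_finRange_perm.map f).prod_eq'
    (List.pairwise_map.2 (List.pairwise_of_forall fun a b => hf a b))

theorem Matrix.conjAe_mapMatrix_aeval_smul_map_ofReal {m : Type*} [Fintype m] [DecidableEq m]
    (P : ℝ[X]) (A : Matrix m m ℝ) (z : ℂ) :
    Complex.conjAe.mapMatrix (aeval (z • A.map Complex.ofReal) P) =
      aeval (starRingEnd ℂ z • A.map Complex.ofReal) P := by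
  rw [← aeval_algHom_apply]
  congr 1
  ext i j
  simp [AlgEquiv.mapMatrix_apply, Complex.conjAe]

theorem symmetric_steps_prod_real_general {d n : ℕ} (P : Polynomial ℝ)
    (A : Matrix (Fin d) (Fin d) ℝ) (τ : Fin n → ℂ)
    (π : Equiv.Perm (Fin n))
    (hsym : ∀ j, τ j = starRingEnd ℂ (τ (π j))) :
    ∀ i j, (((List.finRange n).map
        (fun l => Polynomial.aeval ((τ l) • A.map Complex.ofReal) P)).prod i j).im = 0 := by
  set f : Fin n → Matrix (Fin d) (Fin d) ℂ := fun l => aeval (τ l • A.map Complex.ofReal) P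
  have hcomm : ∀ a b, Commute (f a) (f b) := fun a b =>
    commute_aeval_aeval (((Commute.refl _).smul_left (τ a)).smul_right (τ b)) P P
  have hconj : ∀ l, Complex.conjAe.mapMatrix (f l) = f (π l) := fun l => by
    simp only [f, conjAe_mapMatrix_aeval_smul_map_ofReal, hsym l, Complex.conj_conj]
  have hfixed : Complex.conjAe.mapMatrix ((List.finRange n).map f).prod =
      ((List.finRange n).map f).prod := by
    rw [map_list_prod, List.map_map]
    calc ((List.finRange n).map (Complex.conjAe.mapMatrix ∘ f)).prod
        = ((List.finRange n).map (f ∘ π)).prod :=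
          congrArg _ (List.map_congr_left fun l _ => hconj l)
      _ = ((List.finRange n).map f).prod := List.prod_map_finRange_comp_perm hcomm π
  intro i j
  exact Complex.conj_eq_iff_im.mp (congrFun (congrFun hfixed i) j)

/-- If the complex step sequence `τ` is symmetric (there is an involution `π`
with `τ j = conj (τ (π j))`), `P` is a real polynomial and `A` a real matrix,
then `∏_j P(τ_j A)` is a real matrix. -/
theorem symmetric_steps_prod_real {d n : ℕ} (P : Polynomial ℝ)
    (A : Matrix (Fin d) (Fin d) ℝ) (τ : Fin n → ℂ)
    (π : Equiv.Perm (Fin n)) (hπ : ∀ j, π (π j) = j)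
    (hsym : ∀ j, τ j = starRingEnd ℂ (τ (π j))) :
    ∀ i j, (((List.finRange n).map
        (fun l => Polynomial.aeval ((τ l) • A.map Complex.ofReal) P)).prod i j).im = 0 :=
  symmetric_steps_prod_real_general P A τ π hsym
end

section
/- Let p ≥ 1, n ≥ 2, t_0 ≠ t ∈ ℂ, and let τ_j := γ((j+1)/n) − γ(j/n) for j = 0,…,n−1, where γ(x) = (t_0 − t)/(2i sin(π/(p+1)))·(e^{iπ(1−2x)/(p+1)} − cos(π/(p+1))) + (t_0+t)/2. Then Σ_{j=0}^{n−1} τ_j^{p+1} = 0 and Σ_{j=0}^{n−1} τ_j = t − t_0. -/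
/-!
With `θ = π / (p + 1)` and `ω = exp (-2iθ / n)`, the node values are `γ (k / n) = K ω ^ k + L`,
so the steps `τ_j = K (ω - 1) ω ^ j` form a geometric progression. Their `(p + 1)`-th powers are
a common factor times `(ω ^ (p + 1)) ^ j`, and `ω ^ (p + 1) = exp (-2πi / n)` is a primitive
`n`-th root of unity, whose powers sum to zero for `n ≥ 2`. The steps themselves telescope to
`γ 1 - γ 0 = (t₀ - t) / (2i sin θ) · (e^{-iθ} - e^{iθ}) = t - t₀`.
-/

open Complex Finset

noncomputable def gammaPath (p : ℕ) (t₀ t : ℂ) (x : ℝ) : ℂ :=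
  (t₀ - t) / (2 * Complex.I * Real.sin (Real.pi / (p + 1))) *
      (Complex.exp (Complex.I * Real.pi * (1 - 2 * x) / (p + 1))
        - Real.cos (Real.pi / (p + 1)))
    + (t₀ + t) / 2

open scoped Real

theorem sum_range_sub_pow_eq_zero_of_affine_geom {R : Type*} [CommRing R] [IsDomain R]
    {f : ℕ → R} {K L ω : R} {m n : ℕ} (hf : ∀ k, f k = K * ω ^ k + L)
    (hω : IsPrimitiveRoot (ω ^ m) n) (hn : 1 < n) :
    ∑ j ∈ range n, (f (j + 1) - f j) ^ m = 0 := by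
  have hstep (j : ℕ) : (f (j + 1) - f j) ^ m = (K * (ω - 1)) ^ m * (ω ^ m) ^ j := by
    rw [hf, hf, ← pow_mul, mul_comm m, pow_mul, ← mul_pow]
    ring
  rw [sum_congr rfl fun j _ => hstep j, ← mul_sum, hω.geom_sum_eq_zero hn, mul_zero]

theorem exists_gammaPath_natCast_div_eq (p n : ℕ) (t₀ t : ℂ) :
    ∃ K L : ℂ, ∀ k : ℕ, gammaPath p t₀ t ((k : ℝ) / n) =
      K * exp (-(2 * π * I) / (n * (p + 1))) ^ k + L := by
  refine ⟨(t₀ - t) / (2 * I * Real.sin (π / (p + 1))) * exp (π * I / (p + 1)),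
    -((t₀ - t) / (2 * I * Real.sin (π / (p + 1)))) * Real.cos (π / (p + 1)) + (t₀ + t) / 2,
    fun k => ?_⟩
  have hexp : exp (I * π * (1 - 2 * ((k : ℝ) / n : ℝ)) / (p + 1)) =
      exp (π * I / (p + 1)) * exp (-(2 * π * I) / (n * (p + 1))) ^ k := by
    rw [← exp_nat_mul, ← exp_add]
    congr 1
    push_cast
    simp only [div_eq_mul_inv, mul_inv]
    ring
  rw [gammaPath, hexp]
  ring

theorem isPrimitiveRoot_exp_div_pow (p n : ℕ) (hn : n ≠ 0) :
    IsPrimitiveRoot (exp (-(2 * π * I) / (n * (p + 1))) ^ (p + 1)) n := by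
  have hp : ((p : ℂ) + 1) ≠ 0 := by exact_mod_cast p.succ_ne_zero
  rw [← exp_nat_mul, show ((p + 1 : ℕ) : ℂ) * (-(2 * π * I) / (n * (p + 1))) = -(2 * π * I / n) by
    push_cast; field_simp, exp_neg]
  exact (isPrimitiveRoot_exp n hn).inv

theorem Real.sin_pi_div_natCast_add_one_ne_zero {p : ℕ} (hp : 1 ≤ p) :
    Real.sin (π / (p + 1)) ≠ 0 := by
  have hp' : (1 : ℝ) < p + 1 := by exact_mod_cast Nat.lt_succ_of_le hp
  exact (Real.sin_pos_of_pos_of_lt_pi (by positivity) (div_lt_self Real.pi_pos hp')).ne'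

theorem gammaPath_one_sub_gammaPath_zero {p : ℕ} (hp : 1 ≤ p) (t₀ t : ℂ) :
    gammaPath p t₀ t 1 - gammaPath p t₀ t 0 = t - t₀ := by
  have hs : ((Real.sin (π / (p + 1)) : ℝ) : ℂ) ≠ 0 :=
    ofReal_ne_zero.mpr (Real.sin_pi_div_natCast_add_one_ne_zero hp)
  have hends : exp (I * π * (1 - 2 * ((1 : ℝ) : ℂ)) / (p + 1)) -
      exp (I * π * (1 - 2 * ((0 : ℝ) : ℂ)) / (p + 1)) = -2 * I * Real.sin (π / (p + 1)) := by
    rw [ofReal_sin]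
    push_cast
    rw [sin, show I * π * (1 - 2 * 1) / (p + 1) = -(π / (p + 1)) * I by ring,
      show I * π * (1 - 2 * 0) / (p + 1) = π / (p + 1) * I by ring, neg_mul]
    linear_combination (exp (-(π / (p + 1) * I)) - exp (π / (p + 1) * I)) * I_sq
  have hscale : (t₀ - t) / (2 * I * Real.sin (π / (p + 1))) * (-2 * I * Real.sin (π / (p + 1)))
      = t - t₀ := by
    field_simp
    ring
  unfold gammaPath
  linear_combination (t₀ - t) / (2 * I * Real.sin (π / (p + 1))) * hends + hscale

theorem gammaPath_superconvergence_general (p n : ℕ) (hp : 1 ≤ p) (hn : 2 ≤ n)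
    (t₀ t : ℂ) :
    (∑ j ∈ Finset.range n,
        (gammaPath p t₀ t ((j + 1 : ℕ) / n) - gammaPath p t₀ t (j / n)) ^ (p + 1) = 0)
    ∧ (∑ j ∈ Finset.range n,
        (gammaPath p t₀ t ((j + 1 : ℕ) / n) - gammaPath p t₀ t (j / n)) = t - t₀) := by
  have hn₀ : n ≠ 0 := by omega
  obtain ⟨K, L, hnodes⟩ := exists_gammaPath_natCast_div_eq p n t₀ t
  refine ⟨sum_range_sub_pow_eq_zero_of_affine_geom (f := fun k : ℕ => gammaPath p t₀ t (k / n))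
    hnodes (isPrimitiveRoot_exp_div_pow p n hn₀) hn, ?_⟩
  rw [sum_range_sub (fun k : ℕ => gammaPath p t₀ t (k / n)), Nat.cast_zero, zero_div,
    div_self (Nat.cast_ne_zero.mpr hn₀)]
  exact gammaPath_one_sub_gammaPath_zero hp t₀ t

/-- Superconvergence of the equidistant discretization of the circle-segment
path: the `(p+1)`-th powers of the steps sum to zero, and the steps sum to
`t - t₀`. -/
theorem gammaPath_superconvergence (p n : ℕ) (hp : 1 ≤ p) (hn : 2 ≤ n)
    (t₀ t : ℂ) (h : t₀ ≠ t) :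
    (∑ j ∈ Finset.range n,
        (gammaPath p t₀ t ((j + 1 : ℕ) / n) - gammaPath p t₀ t (j / n)) ^ (p + 1) = 0)
    ∧ (∑ j ∈ Finset.range n,
        (gammaPath p t₀ t ((j + 1 : ℕ) / n) - gammaPath p t₀ t (j / n)) = t - t₀) :=
  gammaPath_superconvergence_general p n hp hn t₀ t
end

section
/- Let n ≥ 2 and p ≥ 1 be integers and let t̃_j := (1/2)(e^{iπ(1−j/n)} + 1) for j = 0,…,n (the equidistant discretization of the upper half circle from 0 to 1, case p = 1). Then the steps τ_j := t̃_{j+1} − t̃_j satisfy Σ_{j=0}^{n−1} τ_j² = 0 and Σ_{j=0}^{n−1} τ_j = 1. -/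
open Complex Finset
open scoped Real

/-!
With `ω = exp(-πi/n)` one has `exp(iπ(1 - j/n)) = -ω^j`, so the nodes are `t̃_j = (1 - ω^j)/2`
and the steps `τ_j = (1 - ω) ω^j / 2` form a geometric progression. Their sum telescopes to
`(1 - ω^n)/2 = 1`, and `∑ τ_j² = (1 - ω)²/4 · ∑ (ω²)^j` vanishes because `ω²` is a primitive
`n`-th root of unity.
-/

theorem IsPrimitiveRoot.sum_sq_mul_sub_pow_succ_eq_zero {R : Type*} [CommRing R] [IsDomain R]
    {ω : R} {n : ℕ} (h : IsPrimitiveRoot (ω ^ 2) n) (hn : 1 < n) (c : R) :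
    ∑ j ∈ range n, (c * (ω ^ j - ω ^ (j + 1))) ^ 2 = 0 := by
  have hterm : ∀ j, (c * (ω ^ j - ω ^ (j + 1))) ^ 2 = (c * (1 - ω)) ^ 2 * (ω ^ 2) ^ j :=
    fun j ↦ by ring
  simp only [hterm, ← mul_sum, h.geom_sum_eq_zero hn, mul_zero]

lemma exp_I_pi_mul_one_sub_div (n j : ℕ) :
    exp (I * π * (1 - (j : ℂ) / n)) = -exp (-(π * I / n)) ^ j := by
  rw [← exp_nat_mul, ← neg_one_mul, ← exp_pi_mul_I, ← exp_add]
  congr 1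
  ring

lemma half_circle_step_eq (n j : ℕ) :
    (1 / 2 : ℂ) * (exp (I * π * (1 - ((j : ℂ) + 1) / n)) + 1)
        - (1 / 2 : ℂ) * (exp (I * π * (1 - (j : ℂ) / n)) + 1)
      = 1 / 2 * (exp (-(π * I / n)) ^ j - exp (-(π * I / n)) ^ (j + 1)) := by
  have hsucc := exp_I_pi_mul_one_sub_div n (j + 1)
  push_cast at hsucc
  rw [hsucc, exp_I_pi_mul_one_sub_div]
  ring

lemma isPrimitiveRoot_exp_neg_pi_I_div_sq {n : ℕ} (hn : n ≠ 0) :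
    IsPrimitiveRoot (exp (-(π * I / n)) ^ 2) n := by
  have h : exp (-(π * I / n)) ^ 2 = (exp (2 * π * I / n))⁻¹ := by
    rw [← exp_nat_mul, ← exp_neg]
    congr 1
    ring
  exact h ▸ (isPrimitiveRoot_exp n hn).inv

lemma exp_neg_pi_I_div_pow_self {n : ℕ} (hn : n ≠ 0) : exp (-(π * I / n)) ^ n = -1 := by
  rw [← exp_nat_mul, mul_neg, mul_div_cancel₀ _ (Nat.cast_ne_zero.mpr hn), exp_neg,
    exp_pi_mul_I, inv_neg, inv_one]

theorem half_circle_grid_superconvergence_general (n : ℕ) (hn : 2 ≤ n) :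
    (∑ j ∈ Finset.range n,
        ((1 / 2 : ℂ) * (Complex.exp (Complex.I * Real.pi * (1 - ((j : ℂ) + 1) / n)) + 1)
          - (1 / 2 : ℂ) * (Complex.exp (Complex.I * Real.pi * (1 - (j : ℂ) / n)) + 1)) ^ 2 = 0)
    ∧ (∑ j ∈ Finset.range n,
        ((1 / 2 : ℂ) * (Complex.exp (Complex.I * Real.pi * (1 - ((j : ℂ) + 1) / n)) + 1)
          - (1 / 2 : ℂ) * (Complex.exp (Complex.I * Real.pi * (1 - (j : ℂ) / n)) + 1)) = 1) := by
  have hn0 : n ≠ 0 := by omega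
  simp only [half_circle_step_eq]
  refine ⟨(isPrimitiveRoot_exp_neg_pi_I_div_sq hn0).sum_sq_mul_sub_pow_succ_eq_zero hn _, ?_⟩
  rw [← mul_sum, sum_range_sub', pow_zero, exp_neg_pi_I_div_pow_self hn0]
  norm_num

/-- For the equidistant discretization `t̃_j = (1/2)(e^{iπ(1 - j/n)} + 1)` of the
upper half circle from `0` to `1`, the steps satisfy `∑ τ_j² = 0` and
`∑ τ_j = 1`. -/
theorem half_circle_grid_superconvergence (n p : ℕ) (hn : 2 ≤ n) (hp : 1 ≤ p) :
    (∑ j ∈ Finset.range n,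
        ((1 / 2 : ℂ) * (Complex.exp (Complex.I * Real.pi * (1 - ((j : ℂ) + 1) / n)) + 1)
          - (1 / 2 : ℂ) * (Complex.exp (Complex.I * Real.pi * (1 - (j : ℂ) / n)) + 1)) ^ 2 = 0)
    ∧ (∑ j ∈ Finset.range n,
        ((1 / 2 : ℂ) * (Complex.exp (Complex.I * Real.pi * (1 - ((j : ℂ) + 1) / n)) + 1)
          - (1 / 2 : ℂ) * (Complex.exp (Complex.I * Real.pi * (1 - (j : ℂ) / n)) + 1)) = 1) :=
  half_circle_grid_superconvergence_general n hn
end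

section
/- Let p ≥ 1, n ≥ 2, t_0, t ∈ ℝ with t_0 ≠ t, and let τ_j := γ((j+1)/n) − γ(j/n) be the steps of the equidistant discretization of the (p+1)-th circle-segment path γ = γ^p_{t_0,t}. If p = 1 and n is even, the step sequence is symmetric: τ_j = conj(τ_{n−1−j}) for all j ∈ {0,…,n−1}. -/
open Complex

/-! For `p = 1` the path is `x ↦ m + r · exp (iπ (1 - 2x) / 2)` with real centre `m = (t₀ + t) / 2`
and purely imaginary `r = (t₀ - t) / (2i)`; reversing the parameter and conjugating is then the
point reflection through `m`. Hence the reversed, conjugated step sequence is the original one. -/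

lemma gammaPath_one (t₀ t : ℂ) (x : ℝ) :
    gammaPath 1 t₀ t x
      = (t₀ - t) / (2 * I) * exp (I * Real.pi * (1 - 2 * x) / 2) + (t₀ + t) / 2 := by
  norm_num [gammaPath, Real.sin_pi_div_two, Real.cos_pi_div_two]

lemma conj_gammaPath_one_one_sub (t₀ t x : ℝ) :
    starRingEnd ℂ (gammaPath 1 t₀ t (1 - x)) = (t₀ + t) - gammaPath 1 t₀ t x := by
  have hexp : starRingEnd ℂ (exp (I * Real.pi * (1 - 2 * ((1 - x : ℝ) : ℂ)) / 2))
      = exp (I * Real.pi * (1 - 2 * x) / 2) := by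
    rw [← exp_conj]
    congr 1
    simp only [map_div₀, map_mul, map_sub, map_one, conj_I, conj_ofReal, map_ofNat]
    push_cast
    ring
  rw [gammaPath_one, gammaPath_one, map_add, map_mul, hexp]
  simp only [map_div₀, map_sub, map_add, map_mul, conj_I, conj_ofReal, map_ofNat]
  field_simp
  ring

lemma sub_eq_conj_sub_of_conj_one_sub {f : ℝ → ℂ} {c : ℂ}
    (hf : ∀ x, starRingEnd ℂ (f (1 - x)) = c - f x) (x y : ℝ) :
    f y - f x = starRingEnd ℂ (f (1 - x) - f (1 - y)) := by
  rw [map_sub, hf, hf]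
  ring

lemma cast_sub_one_sub_div {n j : ℕ} (hj : j < n) :
    ((n - 1 - j : ℕ) : ℝ) / n = 1 - ((j + 1 : ℕ) : ℝ) / n := by
  have hn : (n : ℝ) ≠ 0 := by exact_mod_cast (j.zero_le.trans_lt hj).ne'
  rw [show n - 1 - j = n - (j + 1) by omega, Nat.cast_sub hj, one_sub_div hn]

lemma cast_sub_one_sub_add_one_div {n j : ℕ} (hj : j < n) :
    (((n - 1 - j) + 1 : ℕ) : ℝ) / n = 1 - (j : ℝ) / n := by
  have hn : (n : ℝ) ≠ 0 := by exact_mod_cast (j.zero_le.trans_lt hj).ne'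
  rw [show n - 1 - j + 1 = n - j by omega, Nat.cast_sub hj.le, one_sub_div hn]

theorem half_circle_steps_symmetric_general (p n : ℕ)
    (t₀ t : ℝ) (hp1 : p = 1) :
    ∀ j ∈ Finset.range n,
      gammaPath p (t₀ : ℂ) (t : ℂ) ((j + 1 : ℕ) / n) - gammaPath p (t₀ : ℂ) (t : ℂ) (j / n)
        = starRingEnd ℂ
            (gammaPath p (t₀ : ℂ) (t : ℂ) (((n - 1 - j) + 1 : ℕ) / n)
              - gammaPath p (t₀ : ℂ) (t : ℂ) ((n - 1 - j : ℕ) / n)) := by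
  subst hp1
  intro j hj
  rw [Finset.mem_range] at hj
  rw [cast_sub_one_sub_add_one_div hj, cast_sub_one_sub_div hj]
  exact sub_eq_conj_sub_of_conj_one_sub (conj_gammaPath_one_one_sub t₀ t) _ _

/-- For `p = 1` (half-circle path over a real segment) and even `n`, the
equidistant step sequence is symmetric: `τ_j = conj (τ_{n-1-j})`. -/
theorem half_circle_steps_symmetric (p n : ℕ) (hp : 1 ≤ p) (hn : 2 ≤ n)
    (t₀ t : ℝ) (h : t₀ ≠ t) (hp1 : p = 1) (hneven : Even n) :
    ∀ j ∈ Finset.range n,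
      gammaPath p (t₀ : ℂ) (t : ℂ) ((j + 1 : ℕ) / n) - gammaPath p (t₀ : ℂ) (t : ℂ) (j / n)
        = starRingEnd ℂ
            (gammaPath p (t₀ : ℂ) (t : ℂ) (((n - 1 - j) + 1 : ℕ) / n)
              - gammaPath p (t₀ : ℂ) (t : ℂ) ((n - 1 - j : ℕ) / n)) :=
  half_circle_steps_symmetric_general p n t₀ t hp1
end
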